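/- Let D ≥ 2 be an integer and let G = (V,E) be an infinite, connected, locally finite simple graph in which every vertex has degree at most D. Let p ∈ [0,1] satisfy 1 − p ≤ (D−1)^{D−1}/D^D. Then for every finite W ⊆ V one has Ξ_{G[W]}(p·1) ≥ ((D−1)/D)^{|W|} > 0; in particular the homogeneous vector with all coordinates equal to p lies in the interior Shearer set of G (so the critical homogeneous Shearer parameter of G is at most 1 − (D−1)^{D−1}/D^D). -/

import Mathlib

/-!
Put `r = (D-1)/D`, the maximiser of `(1-r) r^(D-1)`, so that `q = 1 - p ≤ (1-r) r^(D-1)`.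
By strong induction on a finite set `S` one proves both `r^|S| ≤ Ξ(S)` and, for every `u ∈ S`
with a neighbour outside `S`, the ratio bound `r Ξ(S - u) ≤ Ξ(S)`. With `A = S - u`, the
deletion recurrence `Ξ(A + u) = Ξ(A) - q Ξ(A - N(u))` reduces the ratio bound to
`q Ξ(A - N(u)) ≤ (1-r) Ξ(A)`. Deleting the at most `D-1` neighbours of `u` in `A` one at a
time costs a factor `r` each (each of them has `u` as a neighbour outside), so
`r^(D-1) Ξ(A - N(u)) ≤ Ξ(A)`. As `G` is infinite and connected, every nonempty finite `S` has
a vertex with a neighbour outside, which gives the step of the lower bound.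
-/

open MeasureTheory Finset
open scoped Classical

/-- The critical function Ξ_{G[W]}(p). -/
noncomputable def Xi {V : Type*} (G : SimpleGraph V) (W : Finset V) (p : V → ℝ) : ℝ :=
  ∑ T ∈ W.powerset,
    if ∀ u ∈ T, ∀ w ∈ T, ¬ G.Adj u w then ∏ v ∈ T, -(1 - p v) else 0

namespace SimpleGraph
variable {V : Type*} {G : SimpleGraph V}

lemma pairwise_not_adj_insert_iff {u : V} {T : Finset V} :
    (∀ a ∈ insert u T, ∀ b ∈ insert u T, ¬ G.Adj a b) ↔
      (∀ a ∈ T, ∀ b ∈ T, ¬ G.Adj a b) ∧ ∀ w ∈ T, ¬ G.Adj u w := by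
  simp only [forall_mem_insert, G.irrefl, not_false_eq_true, true_and, G.adj_comm _ u, imp_and,
    forall_and]
  tauto

lemma Connected.exists_adj_notMem [Infinite V] (hG : G.Connected) {S : Finset V}
    (hS : S.Nonempty) : ∃ u ∈ S, ∃ x, G.Adj u x ∧ x ∉ S := by
  obtain ⟨s, hs⟩ := hS
  obtain ⟨t, ht⟩ := Infinite.exists_notMem_finset S
  obtain ⟨d, -, hd⟩ := (hG s t).some.exists_boundary_dart S hs ht
  exact ⟨d.fst, hd.1, d.snd, d.adj, hd.2⟩

end SimpleGraph

open SimpleGraph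

section
variable {V : Type*} {G : SimpleGraph V} {p : V → ℝ}

lemma Xi_empty : Xi G ∅ p = 1 := by simp [Xi]

lemma Xi_insert {u : V} {A : Finset V} (hu : u ∉ A) :
    Xi G (insert u A) p = Xi G A p - (1 - p u) * Xi G (A.filter (¬ G.Adj u ·)) p := by
  have hmem : ∀ {T}, T ∈ (A.filter (¬ G.Adj u ·)).powerset ↔ T ⊆ A ∧ ∀ w ∈ T, ¬ G.Adj u w := by
    intro T
    simp only [mem_powerset, subset_iff, mem_filter]
    exact ⟨fun h => ⟨fun w hw => (h hw).1, fun w hw => (h hw).2⟩, fun h w hw => ⟨h.1 hw, h.2 w hw⟩⟩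
  rw [Xi, sum_powerset_insert hu, sub_eq_add_neg, ← neg_mul, Xi, Xi, mul_sum]
  congr 1
  refine (sum_subset (powerset_mono.2 (filter_subset _ _)) fun T hTA hTF => ?_).symm.trans
    (sum_congr rfl fun T hT => ?_)
  · exact if_neg fun h => hTF (hmem.2 ⟨mem_powerset.1 hTA, (pairwise_not_adj_insert_iff.1 h).2⟩)
  · obtain ⟨hTA, hTu⟩ := hmem.1 hT
    rw [prod_insert fun h => hu (hTA h), mul_ite, mul_zero]
    exact if_congr (pairwise_not_adj_insert_iff.trans (and_iff_left hTu)) rfl rfl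

lemma pow_card_mul_le_of_forall_erase {α : Type*} [DecidableEq α] (f : Finset α → ℝ) {r : ℝ}
    (hr : 0 ≤ r) {A B : Finset α} (hBA : B ⊆ A)
    (h : ∀ C ⊆ A, ∀ b ∈ B, b ∈ C → r * f (C.erase b) ≤ f C) :
    r ^ #B * f (A \ B) ≤ f A := by
  induction B using Finset.induction_on with
  | empty => simp
  | insert b B hbB ih =>
    have hb : b ∈ A \ B := mem_sdiff.2 ⟨hBA (mem_insert_self b B), hbB⟩
    calc r ^ #(insert b B) * f (A \ insert b B) = r ^ #B * (r * f ((A \ B).erase b)) := by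
          rw [card_insert_of_notMem hbB, sdiff_insert, pow_succ, mul_assoc]
      _ ≤ r ^ #B * f (A \ B) :=
          mul_le_mul_of_nonneg_left (h _ sdiff_subset b (mem_insert_self b B) hb) (by positivity)
      _ ≤ f A := ih ((subset_insert b B).trans hBA) fun C hC b' hb' =>
          h C hC b' (mem_insert_of_mem hb')

lemma card_filter_adj_lt_of_adj {D : ℕ} {u x : V} {A : Finset V}
    (hdeg : ∀ A : Finset V, #(A.filter (G.Adj u)) ≤ D) (hx : G.Adj u x) (hxA : x ∉ A) :
    #(A.filter (G.Adj u)) < D :=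
  calc #(A.filter (G.Adj u)) < #((insert x A).filter (G.Adj u)) := by
        rw [filter_insert, if_pos hx, card_insert_of_notMem fun h => hxA (mem_filter.1 h).1]
        omega
    _ ≤ D := hdeg _

lemma mul_Xi_le_Xi_insert {u : V} {A : Finset V} (hu : u ∉ A) {r : ℝ} (hr : r ≤ 1)
    (hq : 1 - p u ≤ (1 - r) * r ^ #(A.filter (G.Adj u)))
    (hnonneg : 0 ≤ Xi G (A \ A.filter (G.Adj u)) p)
    (hchain : r ^ #(A.filter (G.Adj u)) * Xi G (A \ A.filter (G.Adj u)) p ≤ Xi G A p) :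
    r * Xi G A p ≤ Xi G (insert u A) p := by
  have hq' := mul_le_mul_of_nonneg_right hq hnonneg
  rw [mul_assoc] at hq'
  calc r * Xi G A p = Xi G A p - (1 - r) * Xi G A p := by ring
    _ ≤ Xi G A p - (1 - r) * (r ^ #(A.filter (G.Adj u)) * Xi G (A \ A.filter (G.Adj u)) p) := by
        gcongr
    _ ≤ Xi G A p - (1 - p u) * Xi G (A \ A.filter (G.Adj u)) p := by linarith
    _ = Xi G (insert u A) p := by rw [Xi_insert hu, filter_not]

theorem pow_card_le_Xi [Infinite V] (hG : G.Connected) {D : ℕ}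
    (hdeg : ∀ u (A : Finset V), #(A.filter (G.Adj u)) ≤ D) {r : ℝ} (hr0 : 0 ≤ r) (hr1 : r ≤ 1)
    (hq : ∀ v, 1 - p v ≤ (1 - r) * r ^ (D - 1)) (W : Finset V) :
    r ^ #W ≤ Xi G W p := by
  suffices ∀ S : Finset V, r ^ #S ≤ Xi G S p ∧
      ∀ u ∈ S, ∀ x, G.Adj u x → x ∉ S → r * Xi G (S.erase u) p ≤ Xi G S p from (this W).1
  intro S
  induction S using Finset.strongInduction with
  | H S ih =>
  have hratio : ∀ u ∈ S, ∀ x, G.Adj u x → x ∉ S → r * Xi G (S.erase u) p ≤ Xi G S p := by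
    intro u hu x hx hxS
    set A := S.erase u
    have hAS : A ⊂ S := erase_ssubset hu
    have hF : #(A.filter (G.Adj u)) ≤ D - 1 := by
      have := card_filter_adj_lt_of_adj (A := A) (hdeg u) hx fun h => hxS (mem_of_mem_erase h)
      omega
    have hq' : 1 - p u ≤ (1 - r) * r ^ #(A.filter (G.Adj u)) :=
      (hq u).trans (mul_le_mul_of_nonneg_left (pow_le_pow_of_le_one hr0 hr1 hF) (by linarith))
    have hnonneg : 0 ≤ Xi G (A \ A.filter (G.Adj u)) p :=
      (pow_nonneg hr0 _).trans (ih _ (sdiff_subset.trans_ssubset hAS)).1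
    have hchain := pow_card_mul_le_of_forall_erase (Xi G · p) hr0 (filter_subset (G.Adj u) A)
      fun C hC b hb hbC => (ih C (hC.trans_ssubset hAS)).2 b hbC u (mem_filter.1 hb).2.symm
        fun h => notMem_erase u S (hC h)
    simpa only [A, insert_erase hu] using
      mul_Xi_le_Xi_insert (notMem_erase u S) hr1 hq' hnonneg hchain
  refine ⟨?_, hratio⟩
  obtain rfl | hS := S.eq_empty_or_nonempty
  · simp [Xi_empty]
  obtain ⟨u, hu, x, hx, hxS⟩ := hG.exists_adj_notMem hS
  calc r ^ #S = r * r ^ #(S.erase u) := by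
        rw [card_erase_of_mem hu, ← pow_succ', Nat.sub_add_cancel (card_pos.2 hS)]
    _ ≤ r * Xi G (S.erase u) p := by gcongr; exact (ih _ (erase_ssubset hu)).1
    _ ≤ Xi G S p := hratio u hu x hx hxS

end

lemma one_sub_div_mul_div_pow {D : ℕ} (hD : D ≠ 0) :
    (1 - ((D : ℝ) - 1) / D) * (((D : ℝ) - 1) / D) ^ (D - 1) =
      ((D : ℝ) - 1) ^ (D - 1) / (D : ℝ) ^ D := by
  obtain ⟨k, rfl⟩ : ∃ k, D = k + 1 := ⟨D - 1, by omega⟩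
  rw [Nat.add_sub_cancel, div_pow, pow_succ]
  push_cast
  field_simp
  ring

theorem stmt5_general {V : Type*} [Infinite V] (G : SimpleGraph V) (hconn : G.Connected)
    (hlf : ∀ v : V, (G.neighborSet v).Finite)
    (D : ℕ) (hD : 2 ≤ D) (hdeg : ∀ v : V, (hlf v).toFinset.card ≤ D)
    (p : ℝ)
    (hq : 1 - p ≤ ((D : ℝ) - 1) ^ (D - 1) / (D : ℝ) ^ D) :
    ∀ W : Finset V,
      (((D : ℝ) - 1) / D) ^ W.card ≤ Xi G W (fun _ => p) ∧
      0 < Xi G W (fun _ => p) := by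
  intro W
  have hD' : (2 : ℝ) ≤ D := by exact_mod_cast hD
  have hr0 : 0 < ((D : ℝ) - 1) / D := div_pos (by linarith) (by linarith)
  have hr1 : ((D : ℝ) - 1) / D ≤ 1 := div_le_one_of_le₀ (by linarith) (by linarith)
  have hdeg' : ∀ u (A : Finset V), #(A.filter (G.Adj u)) ≤ D := fun u A =>
    (card_le_card fun v hv => (hlf u).mem_toFinset.2 (mem_filter.1 hv).2).trans (hdeg u)
  have hbound := pow_card_le_Xi hconn hdeg' hr0.le hr1
    (fun _ => hq.trans_eq (one_sub_div_mul_div_pow (by omega)).symm) W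
  exact ⟨hbound, (pow_pos hr0 _).trans_le hbound⟩

/-- uniform degree bound D and q ≤ (D-1)^(D-1)/D^D imply Shearer
interior, with explicit lower bound ((D-1)/D)^|W| on the critical functions. -/
theorem stmt5 {V : Type*} [Infinite V] (G : SimpleGraph V) (hconn : G.Connected)
    (hlf : ∀ v : V, (G.neighborSet v).Finite)
    (D : ℕ) (hD : 2 ≤ D) (hdeg : ∀ v : V, (hlf v).toFinset.card ≤ D)
    (p : ℝ) (hp : p ∈ Set.Icc (0:ℝ) 1)
    (hq : 1 - p ≤ ((D : ℝ) - 1) ^ (D - 1) / (D : ℝ) ^ D) :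
    ∀ W : Finset V,
      (((D : ℝ) - 1) / D) ^ W.card ≤ Xi G W (fun _ => p) ∧
      0 < Xi G W (fun _ => p) :=
  stmt5_general G hconn hlf D hD hdeg p hq
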